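/- Let φ be a traveling wave with speed ℓ. Suppose (ζ_n)_{n∈ℤ} is a two-sided sequence of functions ℝ → ℝ satisfying ζ_{n+1}(x) = g((q_ℓ * ζ_n)(x)) for all n ∈ ℤ and x ∈ ℝ, and suppose there exist real numbers ξ̄_− ≤ ξ̄_+ with φ(x + ξ̄_−) ≤ ζ_n(x) ≤ φ(x + ξ̄_+) for all n ∈ ℤ and x ∈ ℝ. If, for some ξ ∈ ℝ, ζ_n(x) ≤ φ(x + ξ) for all n ∈ ℤ and x ∈ ℝ, and there exist n_0 ∈ ℤ and y_0 ∈ ℝ with ζ_{n_0}(y_0) = φ(y_0 + ξ), then ζ_n(x) = φ(x + ξ) for all n ∈ ℤ and x ∈ ℝ. -/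

import Mathlib

open MeasureTheory Filter Topology

/-- Convolution `(q * u)(x) = ∫ q(y) u(x - y) dy`. -/
noncomputable def conv (q u : ℝ → ℝ) (x : ℝ) : ℝ := ∫ y : ℝ, q y * u (x - y)

/-- The shifted kernel `q_ℓ(x) = q(x + ℓ)`. -/
def qshift (q : ℝ → ℝ) (ℓ : ℝ) (x : ℝ) : ℝ := q (x + ℓ)

/-- The bistable setting: a `C¹` compactly supported probability density `q`, and a
polynomial `P` (the recursion polynomial, i.e. `g` on `[0,1]`) with `P(0) = 0`, `P(1) = 1`,
`0 < P < 1` and `P' > 0` on `(0,1)`; the nonlinearity `f(x) = P(x) - x` has a unique zero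
`θ ∈ (0,1)` and `f'(0) < 0`, `f'(1) < 0` (equivalently `P'(0) < 1`, `P'(1) < 1`). -/
structure BistableSetting where
  q : ℝ → ℝ
  P : Polynomial ℝ
  θ : ℝ
  hq_diff : ContDiff ℝ 1 q
  hq_supp : HasCompactSupport q
  hq_nonneg : ∀ x, 0 ≤ q x
  hq_int : ∫ x : ℝ, q x = 1
  hP0 : P.eval 0 = 0
  hP1 : P.eval 1 = 1
  hP_range : ∀ x ∈ Set.Ioo (0 : ℝ) 1, 0 < P.eval x ∧ P.eval x < 1
  hP_mono : ∀ x ∈ Set.Ioo (0 : ℝ) 1, 0 < (Polynomial.derivative P).eval x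
  hθ_mem : θ ∈ Set.Ioo (0 : ℝ) 1
  hθ_zero : P.eval θ = θ
  hθ_unique : ∀ x ∈ Set.Ioo (0 : ℝ) 1, P.eval x = x → x = θ
  hf'0 : (Polynomial.derivative P).eval 0 < 1
  hf'1 : (Polynomial.derivative P).eval 1 < 1

/-- The nonlinearity `g`, equal to the polynomial `P` on `[0,1]` and extended linearly:
`g(x) = x + f'(0)·x` for `x < 0` and `g(x) = x + f'(1)(x-1)` for `x > 1`. -/
noncomputable def BistableSetting.g (S : BistableSetting) (x : ℝ) : ℝ :=
  if x < 0 then (Polynomial.derivative S.P).eval 0 * x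
  else if x ≤ 1 then S.P.eval x
  else 1 + (Polynomial.derivative S.P).eval 1 * (x - 1)

/-- A traveling wave with speed `ℓ`: a nondecreasing `C¹` function `φ` with
`φ = g(q_ℓ * φ)`, `φ(-∞) = 0` and `φ(+∞) = 1`. -/
structure IsTravelingWave (S : BistableSetting) (ℓ : ℝ) (φ : ℝ → ℝ) : Prop where
  mono : Monotone φ
  smooth : ContDiff ℝ 1 φ
  wave_eq : ∀ x, φ x = S.g (conv (qshift S.q ℓ) φ x)
  limit_bot : Tendsto φ atBot (𝓝 0)
  limit_top : Tendsto φ atTop (𝓝 1)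

open Set Pointwise Polynomial

/-!
Write `ψ = φ(· + ξ)`, itself a traveling wave. If `ζ_{r+1}(z) = ψ(z)`, then, `g` being injective
on `[0, 1]` and `ζ_r ≤ ψ`, the convolutions `q_ℓ * ζ_r` and `q_ℓ * ψ` agree at `z`, so `ζ_r = ψ`
almost everywhere on `z - supp q_ℓ`. A wave forces `q_ℓ` to charge both half-lines, so, going back
from the touching point, the contact set at time `n₀ - n` contains almost all of
`y₀ - n • supp q_ℓ`, which eventually covers any ball. Off a large ball both `ζ` and `ψ` sit in
the ranges near `0` or `1` where `g` contracts with some constant `κ < 1` (on the right the lower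
bound `φ(· + ξm)` keeps `ζ` near `1`). Hence at all early times `ψ - ζ_r ≤ κ ^ i` a.e. for every
`i`, so `ζ_r = ψ` a.e., and one step of the recursion upgrades this to equality everywhere, at
all later times.
-/

theorem ae_mem_of_forall_ae_sub_mem {G : Type*} [TopologicalSpace G] [AddCommGroup G]
    [IsTopologicalAddGroup G] [TopologicalSpace.PseudoMetrizableSpace G]
    [TopologicalSpace.SeparableSpace G] [MeasurableSpace G] {μ : Measure G} {A B U V : Set G}
    (hV : IsOpen V) (hU : U ⊆ closure A) (hB : ∀ z ∈ A, ∀ᵐ x ∂μ, z - x ∈ V → x ∈ B) :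
    ∀ᵐ x ∂μ, x ∈ U - V → x ∈ B := by
  obtain ⟨D, hDA, hDc, hAD⟩ :=
    (TopologicalSpace.IsSeparable.of_separableSpace A).exists_countable_dense_subset
  have hUV : U - V ⊆ D - V := by
    rw [← hV.closure_sub D]
    exact sub_subset_sub_right (hU.trans (closure_minimal hAD isClosed_closure))
  filter_upwards [(ae_ball_iff hDc).2 fun d hd => hB d (hDA hd)] with x hx hxUV
  obtain ⟨d, hd, v, hv, rfl⟩ := hUV hxUV
  exact hx d hd (by simpa using hv)

theorem subset_closure_of_ae_mem {X : Type*} [TopologicalSpace X] [MeasurableSpace X]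
    {μ : Measure X} [μ.IsOpenPosMeasure] {A U : Set X} (hU : IsOpen U)
    (hA : ∀ᵐ x ∂μ, x ∈ U → x ∈ A) : U ⊆ closure A := by
  refine fun x hx => _root_.mem_closure_iff.2 fun W hW hxW => ?_
  by_contra hWA
  refine (hW.inter hU).measure_ne_zero μ ⟨x, hxW, hx⟩ (measure_mono_null ?_ (ae_iff.1 hA))
  exact fun y ⟨hyW, hyU⟩ hyA => hWA ⟨y, hyW, hyA hyU⟩

theorem eventually_ball_subset_nsmul {V : Set ℝ} (hV : IsOpen V) {a b : ℝ} (ha : a ∈ V)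
    (hb : b ∈ V) (ha0 : a < 0) (hb0 : 0 < b) (M : ℝ) :
    ∀ᶠ n : ℕ in atTop, Metric.ball 0 M ⊆ n • V := by
  obtain ⟨δa, hδa, hVa⟩ := Metric.isOpen_iff.1 hV a ha
  obtain ⟨δb, hδb, hVb⟩ := Metric.isOpen_iff.1 hV b hb
  set δ := min δa δb
  have hδ : 0 < δ := lt_min hδa hδb
  filter_upwards [tendsto_natCast_atTop_atTop.eventually_gt_atTop
    (max ((b - a) / δ) (max (M / b) (M / -a)))] with n hn t ht
  simp only [max_lt_iff, div_lt_iff₀ hδ, div_lt_iff₀ hb0, div_lt_iff₀ (neg_pos.2 ha0)] at hn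
  obtain ⟨hnδ, hnb, hna⟩ := hn
  rw [mem_ball_zero_iff, Real.norm_eq_abs, abs_lt] at ht
  have hn0 : (0 : ℝ) < n := by nlinarith
  -- `t` is within `b - a` of the lattice point `k a + (n - k) b`, `k = ⌊(n b - t) / (b - a)⌋`
  set x := (n * b - t) / (b - a)
  have hba : 0 < b - a := by linarith
  have hx0 : 0 ≤ x := div_nonneg (by linarith) hba.le
  have hxn : x ≤ n := by rw [div_le_iff₀ hba]; nlinarith
  set k := ⌊x⌋₊
  have hkx : (k : ℝ) ≤ x := Nat.floor_le hx0
  have hxk : x < k + 1 := Nat.lt_floor_add_one x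
  have hkn : k ≤ n := by exact_mod_cast hkx.trans hxn
  set e := (t - (k * a + (n - k) * b)) / n
  have he : |e| < δ := by
    have hdiff : t - (k * a + (n - k) * b) = (k - x) * (b - a) := by
      simp only [x]; field_simp; ring
    rw [abs_div, abs_of_pos hn0, div_lt_iff₀ hn0, hdiff, abs_mul, abs_of_pos hba,
      abs_of_nonpos (by linarith)]
    nlinarith
  have hmem : ∀ c, dist (c + e) c < δ := fun c => by simpa [Real.dist_eq] using he
  rw [← Nat.add_sub_cancel' hkn, add_nsmul]
  refine ⟨k • (a + e), nsmul_mem_nsmul (hVa ((hmem a).trans_le (min_le_left _ _))),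
    (n - k) • (b + e), nsmul_mem_nsmul (hVb ((hmem b).trans_le (min_le_right _ _))), ?_⟩
  simp only [e, nsmul_eq_mul, Nat.cast_sub hkn]
  field_simp
  ring

theorem IsPreconnected.lt_of_lt_of_forall_ne {X α : Type*} [TopologicalSpace X] [LinearOrder α]
    [TopologicalSpace α] [OrderClosedTopology α] {s : Set X} (hs : IsPreconnected s)
    {f : X → α} (hf : ContinuousOn f s) {c : α} (hne : ∀ x ∈ s, f x ≠ c) {x₀ x : X}
    (hx₀ : x₀ ∈ s) (hfx₀ : f x₀ < c) (hx : x ∈ s) : f x < c := by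
  by_contra! hc
  obtain ⟨w, hw, hfw⟩ := hs.intermediate_value hx₀ hx hf ⟨hfx₀.le, hc⟩
  exact hne w hw hfw

theorem Polynomial.exists_sub_le_mul_sub_of_eval_derivative_lt (p : ℝ[X]) {x₀ κ : ℝ}
    (h : p.derivative.eval x₀ < κ) :
    ∃ ε > 0, ∀ a ∈ Icc (x₀ - ε) (x₀ + ε), ∀ b ∈ Icc (x₀ - ε) (x₀ + ε), a ≤ b →
      p.eval b - p.eval a ≤ κ * (b - a) := by
  obtain ⟨ε, hε, hball⟩ := Metric.eventually_nhds_iff_ball.1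
    (p.derivative.continuous.continuousAt.eventually_lt continuousAt_const h)
  refine ⟨ε / 2, half_pos hε, fun a ha b hb hab => (convex_Icc _ _).image_sub_le_mul_sub_of_deriv_le
    p.continuous.continuousOn p.differentiable.differentiableOn (fun x hx => ?_) a ha b hb hab⟩
  rw [interior_Icc] at hx
  rw [Polynomial.deriv]
  refine (hball x ?_).le
  rw [Metric.mem_ball, Real.dist_eq, abs_lt]
  constructor <;> linarith [hx.1, hx.2]

namespace BistableSetting

variable (S : BistableSetting)

theorem g_eq_eval {z : ℝ} (hz : z ∈ Icc 0 1) : S.g z = S.P.eval z := by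
  rw [BistableSetting.g, if_neg (not_lt.2 hz.1), if_pos hz.2]

theorem g_zero : S.g 0 = 0 := by
  rw [S.g_eq_eval ⟨le_rfl, zero_le_one⟩, S.hP0]

theorem g_one : S.g 1 = 1 := by
  rw [S.g_eq_eval ⟨zero_le_one, le_rfl⟩, S.hP1]

theorem strictMonoOn_g : StrictMonoOn S.g (Icc 0 1) := by
  refine (strictMonoOn_of_deriv_pos (convex_Icc 0 1) S.P.continuous.continuousOn
    fun x hx => ?_).congr fun z hz => (S.g_eq_eval hz).symm
  rw [interior_Icc] at hx
  rw [Polynomial.deriv]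
  exact S.hP_mono x hx

theorem exists_contraction : ∃ η > 0, η < 1 ∧ ∃ κ, 0 ≤ κ ∧ κ < 1 ∧
    (∀ a ∈ Icc 0 η, ∀ b ∈ Icc 0 η, a ≤ b → S.g b - S.g a ≤ κ * (b - a)) ∧
    (∀ a ∈ Icc (1 - η) 1, ∀ b ∈ Icc (1 - η) 1, a ≤ b → S.g b - S.g a ≤ κ * (b - a)) := by
  set m := max (max (S.P.derivative.eval 0) (S.P.derivative.eval 1)) 0
  have hm0 : 0 ≤ m := le_max_right _ _
  have hm1 : m < 1 := max_lt (max_lt S.hf'0 S.hf'1) one_pos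
  have hd0 : S.P.derivative.eval 0 ≤ m := (le_max_left _ _).trans (le_max_left _ _)
  have hd1 : S.P.derivative.eval 1 ≤ m := (le_max_right _ _).trans (le_max_left _ _)
  obtain ⟨ε₀, hε₀, h₀⟩ := S.P.exists_sub_le_mul_sub_of_eval_derivative_lt
    (show S.P.derivative.eval 0 < (m + 1) / 2 by linarith)
  obtain ⟨ε₁, hε₁, h₁⟩ := S.P.exists_sub_le_mul_sub_of_eval_derivative_lt
    (show S.P.derivative.eval 1 < (m + 1) / 2 by linarith)
  set η := min (min ε₀ ε₁) (1 / 2)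
  have hη₀ : η ≤ ε₀ := (min_le_left _ _).trans (min_le_left _ _)
  have hη₁ : η ≤ ε₁ := (min_le_left _ _).trans (min_le_right _ _)
  have hη : η ≤ 1 / 2 := min_le_right _ _
  have hI₀ : Icc 0 η ⊆ Icc 0 1 ∩ Icc (0 - ε₀) (0 + ε₀) := fun z hz =>
    ⟨⟨hz.1, by linarith [hz.2]⟩, by linarith [hz.1], by linarith [hz.2]⟩
  have hI₁ : Icc (1 - η) 1 ⊆ Icc 0 1 ∩ Icc (1 - ε₁) (1 + ε₁) := fun z hz =>
    ⟨⟨by linarith [hz.1], hz.2⟩, by linarith [hz.1], by linarith [hz.2]⟩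
  refine ⟨η, by positivity, by linarith, (m + 1) / 2, by positivity, by linarith,
    fun a ha b hb hab => ?_, fun a ha b hb hab => ?_⟩
  · rw [S.g_eq_eval (hI₀ ha).1, S.g_eq_eval (hI₀ hb).1]
    exact h₀ a (hI₀ ha).2 b (hI₀ hb).2 hab
  · rw [S.g_eq_eval (hI₁ ha).1, S.g_eq_eval (hI₁ hb).1]
    exact h₁ a (hI₁ ha).2 b (hI₁ hb).2 hab

theorem eval_lt_self {z : ℝ} (hz : z ∈ Ioo 0 S.θ) : S.P.eval z < z := by
  obtain ⟨η, hη, -, κ, -, hκ, h₀, -⟩ := S.exists_contraction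
  set x₀ := min η (S.θ / 2)
  have hx₀ : x₀ ∈ Ioo 0 S.θ := ⟨lt_min hη (half_pos S.hθ_mem.1), by
    simp only [x₀]; linarith [min_le_right η (S.θ / 2), S.hθ_mem.1]⟩
  have hPx₀ : S.P.eval x₀ - x₀ < 0 := by
    have := h₀ 0 ⟨le_rfl, hη.le⟩ x₀ ⟨hx₀.1.le, min_le_left _ _⟩ hx₀.1.le
    rw [S.g_zero, S.g_eq_eval ⟨hx₀.1.le, hx₀.2.le.trans S.hθ_mem.2.le⟩] at this
    nlinarith [hx₀.1]
  have hne : ∀ x ∈ Ioo 0 S.θ, S.P.eval x - x ≠ 0 := fun x hx hfx =>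
    hx.2.ne (S.hθ_unique x ⟨hx.1, hx.2.trans S.hθ_mem.2⟩ (sub_eq_zero.1 hfx))
  have := isPreconnected_Ioo.lt_of_lt_of_forall_ne (f := fun x => S.P.eval x - x)
    (S.P.continuous.sub continuous_id).continuousOn hne hx₀ hPx₀ hz
  linarith

theorem lt_eval_self {z : ℝ} (hz : z ∈ Ioo S.θ 1) : z < S.P.eval z := by
  obtain ⟨η, hη, -, κ, -, hκ, -, h₁⟩ := S.exists_contraction
  set x₁ := max (1 - η) ((1 + S.θ) / 2)
  have hx₁ : x₁ ∈ Ioo S.θ 1 := by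
    refine ⟨?_, max_lt (by linarith) (by linarith [S.hθ_mem.2])⟩
    linarith [le_max_right (1 - η) ((1 + S.θ) / 2), S.hθ_mem.2]
  have hPx₁ : x₁ - S.P.eval x₁ < 0 := by
    have := h₁ x₁ ⟨le_max_left _ _, hx₁.2.le⟩ 1 ⟨by linarith, le_rfl⟩ hx₁.2.le
    rw [S.g_one, S.g_eq_eval ⟨S.hθ_mem.1.le.trans hx₁.1.le, hx₁.2.le⟩] at this
    nlinarith [hx₁.2]
  have hne : ∀ x ∈ Ioo S.θ 1, x - S.P.eval x ≠ 0 := fun x hx hfx =>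
    hx.1.ne' (S.hθ_unique x ⟨S.hθ_mem.1.trans hx.1, hx.2⟩ (sub_eq_zero.1 hfx).symm)
  have := isPreconnected_Ioo.lt_of_lt_of_forall_ne (f := fun x => x - S.P.eval x)
    (continuous_id.sub S.P.continuous).continuousOn hne hx₁ hPx₁ hz
  linarith

end BistableSetting

theorem ae_comp_sub_left {p : ℝ → Prop} (x : ℝ) (h : ∀ᵐ t, p t) : ∀ᵐ y, p (x - y) :=
  (Measure.measurePreserving_sub_left volume x).quasiMeasurePreserving.ae h

section Convolution

variable {k u v : ℝ → ℝ} {x : ℝ}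

theorem integrable_mul_comp_sub (hk : Continuous k) (hks : HasCompactSupport k)
    (hu : Continuous u) (x : ℝ) : Integrable fun y => k y * u (x - y) :=
  (hk.mul (hu.comp (continuous_const.sub continuous_id))).integrable_of_hasCompactSupport
    hks.mul_right

theorem conv_comp_add_right (a : ℝ) :
    conv k (fun t => u (t + a)) x = conv k u (x + a) := by
  simp only [conv, sub_add_eq_add_sub]

theorem conv_congr_ae (h : ∀ᵐ t, u t = v t) : conv k u x = conv k v x :=
  integral_congr_ae <| (ae_comp_sub_left x h).mono fun y hy => by simp only [hy]

theorem conv_sub (hu : Integrable fun y => k y * u (x - y))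
    (hv : Integrable fun y => k y * v (x - y)) :
    conv k (fun t => u t - v t) x = conv k u x - conv k v x := by
  simp only [conv, mul_sub]
  exact integral_sub hu hv

theorem conv_mono (hk0 : ∀ y, 0 ≤ k y) (hu0 : ∀ t, 0 ≤ u t) (huv : ∀ t, u t ≤ v t)
    (hv : Integrable fun y => k y * v (x - y)) : conv k u x ≤ conv k v x := by
  by_cases hu : Integrable fun y => k y * u (x - y)
  · exact integral_mono hu hv fun y => mul_le_mul_of_nonneg_left (huv _) (hk0 y)
  · rw [conv, integral_undef hu]
    exact integral_nonneg fun y => mul_nonneg (hk0 y) ((hu0 _).trans (huv _))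

theorem conv_le_of_ae_le (hk0 : ∀ y, 0 ≤ k y) (hk : Integrable k) (hk1 : ∫ y, k y = 1)
    (hu : Integrable fun y => k y * u (x - y)) {m : ℝ}
    (h : ∀ᵐ y, k y ≠ 0 → u (x - y) ≤ m) : conv k u x ≤ m := by
  calc conv k u x ≤ ∫ y, k y * m := integral_mono_ae hu (hk.mul_const m) <| h.mono fun y hy => by
        rcases eq_or_ne (k y) 0 with hky | hky
        · simp [hky]
        · exact mul_le_mul_of_nonneg_left (hy hky) (hk0 y)
    _ = m := by rw [integral_mul_const, hk1, one_mul]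

theorem le_conv_of_ae_le (hk0 : ∀ y, 0 ≤ k y) (hk : Integrable k) (hk1 : ∫ y, k y = 1)
    (hu : Integrable fun y => k y * u (x - y)) {m : ℝ}
    (h : ∀ᵐ y, k y ≠ 0 → m ≤ u (x - y)) : m ≤ conv k u x := by
  calc m = ∫ y, k y * m := by rw [integral_mul_const, hk1, one_mul]
    _ ≤ conv k u x := integral_mono_ae (hk.mul_const m) hu <| h.mono fun y hy => by
        rcases eq_or_ne (k y) 0 with hky | hky
        · simp [hky]
        · exact mul_le_mul_of_nonneg_left (hy hky) (hk0 y)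

/-- This includes the case of a non-integrable `fun y => k y * u (x - y)`: then `conv k u x = 0`
by convention, so `v`, and with it `u`, vanishes where `k ≠ 0`. -/
theorem ae_eq_of_conv_eq (hk0 : ∀ y, 0 ≤ k y) (hu0 : ∀ t, 0 ≤ u t) (huv : ∀ t, u t ≤ v t)
    (hv : Integrable fun y => k y * v (x - y)) (h : conv k u x = conv k v x) :
    ∀ᵐ t, k (x - t) ≠ 0 → u t = v t := by
  suffices ∀ᵐ y, k y ≠ 0 → u (x - y) = v (x - y) by
    simpa only [sub_sub_cancel] using ae_comp_sub_left x this
  by_cases hu : Integrable fun y => k y * u (x - y)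
  · have hzero : ∫ y, k y * (v (x - y) - u (x - y)) = 0 := by
      simp only [mul_sub]
      rw [integral_sub hv hu]
      exact sub_eq_zero.2 h.symm
    filter_upwards [(integral_eq_zero_iff_of_nonneg
      (fun y => mul_nonneg (hk0 y) (sub_nonneg.2 (huv _)))
      (by simp only [mul_sub]; exact hv.sub hu)).1 hzero] with y hy hky
    linarith [(mul_eq_zero.1 hy).resolve_left hky]
  · rw [conv, integral_undef hu, eq_comm] at h
    filter_upwards [(integral_eq_zero_iff_of_nonneg
      (fun y => mul_nonneg (hk0 y) ((hu0 _).trans (huv _))) hv).1 h] with y hy hky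
    have hv0 := (mul_eq_zero.1 hy).resolve_left hky
    linarith [hu0 (x - y), huv (x - y)]

end Convolution

namespace BistableSetting

variable (S : BistableSetting) (ℓ : ℝ)

theorem continuous_qshift : Continuous (qshift S.q ℓ) :=
  S.hq_diff.continuous.comp (continuous_add_const ℓ)

theorem hasCompactSupport_qshift : HasCompactSupport (qshift S.q ℓ) :=
  S.hq_supp.comp_homeomorph (Homeomorph.addRight ℓ)

theorem qshift_nonneg (y : ℝ) : 0 ≤ qshift S.q ℓ y := S.hq_nonneg _

theorem integrable_qshift : Integrable (qshift S.q ℓ) :=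
  (S.continuous_qshift ℓ).integrable_of_hasCompactSupport (S.hasCompactSupport_qshift ℓ)

theorem exists_abs_le_of_qshift_ne_zero :
    ∃ D ≥ 0, ∀ y, qshift S.q ℓ y ≠ 0 → |y| ≤ D := by
  obtain ⟨D, hD⟩ := isBounded_iff_forall_norm_le.1 (S.hasCompactSupport_qshift ℓ).isBounded
  exact ⟨max D 0, le_max_right _ _, fun y hy =>
    (hD y (subset_tsupport _ hy)).trans (le_max_left _ _)⟩

theorem integral_qshift : ∫ y, qshift S.q ℓ y = 1 := by
  simp only [qshift, integral_add_right_eq_self, S.hq_int]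

end BistableSetting

namespace IsTravelingWave

variable {S : BistableSetting} {ℓ : ℝ} {φ : ℝ → ℝ}

theorem nonneg (h : IsTravelingWave S ℓ φ) (x : ℝ) : 0 ≤ φ x :=
  le_of_tendsto h.limit_bot (eventually_atBot.2 ⟨x, fun _ ht => h.mono ht⟩)

theorem le_one (h : IsTravelingWave S ℓ φ) (x : ℝ) : φ x ≤ 1 :=
  ge_of_tendsto h.limit_top (eventually_atTop.2 ⟨x, fun _ ht => h.mono ht⟩)

theorem comp_add_right (h : IsTravelingWave S ℓ φ) (a : ℝ) :
    IsTravelingWave S ℓ fun x => φ (x + a) where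
  mono _ _ hxy := h.mono (add_le_add_left hxy a)
  smooth := h.smooth.comp (contDiff_id.add contDiff_const)
  wave_eq x := by rw [conv_comp_add_right]; exact h.wave_eq (x + a)
  limit_bot := h.limit_bot.comp (tendsto_atBot_add_const_right _ a tendsto_id)
  limit_top := h.limit_top.comp (tendsto_atTop_add_const_right _ a tendsto_id)

theorem integrable_conv (h : IsTravelingWave S ℓ φ) (x : ℝ) :
    Integrable fun y => qshift S.q ℓ y * φ (x - y) :=
  integrable_mul_comp_sub (S.continuous_qshift ℓ) (S.hasCompactSupport_qshift ℓ)
    h.smooth.continuous x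

theorem conv_mem_Icc (h : IsTravelingWave S ℓ φ) (x : ℝ) :
    conv (qshift S.q ℓ) φ x ∈ Icc 0 1 :=
  ⟨integral_nonneg fun y => mul_nonneg (S.qshift_nonneg ℓ y) (h.nonneg _),
    conv_le_of_ae_le (S.qshift_nonneg ℓ) (S.integrable_qshift ℓ) (S.integral_qshift ℓ)
      (h.integrable_conv x) (ae_of_all _ fun _ _ => h.le_one _)⟩

theorem lt_conv (h : IsTravelingWave S ℓ φ) {x : ℝ} (hx : φ x ∈ Ioo 0 S.θ) :
    φ x < conv (qshift S.q ℓ) φ x := by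
  by_contra! hc
  have hwave := h.wave_eq x
  rcases (h.conv_mem_Icc x).1.eq_or_lt with h0 | hpos
  · rw [← h0, S.g_zero] at hwave
    exact hx.1.ne' hwave
  · rw [S.g_eq_eval (h.conv_mem_Icc x)] at hwave
    linarith [S.eval_lt_self ⟨hpos, hc.trans_lt hx.2⟩]

theorem conv_lt (h : IsTravelingWave S ℓ φ) {x : ℝ} (hx : φ x ∈ Ioo S.θ 1) :
    conv (qshift S.q ℓ) φ x < φ x := by
  by_contra! hc
  have hwave := h.wave_eq x
  rcases (h.conv_mem_Icc x).2.eq_or_lt with h1 | hlt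
  · rw [h1, S.g_one] at hwave
    exact hx.2.ne hwave
  · rw [S.g_eq_eval (h.conv_mem_Icc x)] at hwave
    linarith [S.lt_eval_self ⟨hx.1.trans_le hc, hlt⟩]

theorem exists_eq (h : IsTravelingWave S ℓ φ) {c : ℝ} (hc : c ∈ Ioo 0 1) : ∃ x, φ x = c :=
  mem_range_of_exists_le_of_exists_ge h.smooth.continuous
    (h.limit_bot.eventually (ge_mem_nhds hc.1)).exists
    (h.limit_top.eventually (le_mem_nhds hc.2)).exists

/-- Were `q_ℓ` supported in `[0, ∞)`, the wave would satisfy `q_ℓ * φ ≤ φ`, which `lt_conv`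
forbids at the level `θ / 2`. -/
theorem exists_neg_qshift_pos (h : IsTravelingWave S ℓ φ) : ∃ a < 0, 0 < qshift S.q ℓ a := by
  by_contra! hk
  obtain ⟨x, hx⟩ := h.exists_eq (c := S.θ / 2) ⟨by linarith [S.hθ_mem.1], by linarith [S.hθ_mem.2]⟩
  refine (h.lt_conv (x := x) (by rw [hx]; constructor <;> linarith [S.hθ_mem.1])).not_ge
    (conv_le_of_ae_le (S.qshift_nonneg ℓ) (S.integrable_qshift ℓ) (S.integral_qshift ℓ)
      (h.integrable_conv x) (ae_of_all _ fun y hy => h.mono ?_))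
  have : 0 ≤ y := not_lt.1 fun hy' => hy (le_antisymm (hk y hy') (S.qshift_nonneg ℓ y))
  linarith

theorem exists_pos_qshift_pos (h : IsTravelingWave S ℓ φ) : ∃ b > 0, 0 < qshift S.q ℓ b := by
  by_contra! hk
  obtain ⟨x, hx⟩ := h.exists_eq (c := (1 + S.θ) / 2)
    ⟨by linarith [S.hθ_mem.1], by linarith [S.hθ_mem.2]⟩
  refine (h.conv_lt (x := x) (by rw [hx]; constructor <;> linarith [S.hθ_mem.2])).not_ge
    (le_conv_of_ae_le (S.qshift_nonneg ℓ) (S.integrable_qshift ℓ) (S.integral_qshift ℓ)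
      (h.integrable_conv x) (ae_of_all _ fun y hy => h.mono ?_))
  have : y ≤ 0 := not_lt.1 fun hy' => hy (le_antisymm (hk y hy') (S.qshift_nonneg ℓ y))
  linarith

end IsTravelingWave

def IsEternalSolution (S : BistableSetting) (ℓ : ℝ) (ζ : ℤ → ℝ → ℝ) : Prop :=
  ∀ n x, ζ (n + 1) x = S.g (conv (qshift S.q ℓ) (ζ n) x)

namespace IsEternalSolution

variable {S : BistableSetting} {ℓ : ℝ} {ψ : ℝ → ℝ} {ζ : ℤ → ℝ → ℝ}

theorem ae_eq_of_eq_succ (hζ : IsEternalSolution S ℓ ζ) (h : IsTravelingWave S ℓ ψ) {r : ℤ}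
    (hζ0 : ∀ x, 0 ≤ ζ r x) (hup : ∀ x, ζ r x ≤ ψ x) {z : ℝ} (hz : ζ (r + 1) z = ψ z) :
    ∀ᵐ x, z - x ∈ Function.support (qshift S.q ℓ) → ζ r x = ψ x := by
  have hle := conv_mono (S.qshift_nonneg ℓ) hζ0 hup (h.integrable_conv z)
  refine ae_eq_of_conv_eq (S.qshift_nonneg ℓ) hζ0 hup (h.integrable_conv z) <|
    S.strictMonoOn_g.injOn ⟨integral_nonneg fun y => mul_nonneg (S.qshift_nonneg ℓ y) (hζ0 _),
      hle.trans (h.conv_mem_Icc z).2⟩ (h.conv_mem_Icc z)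
      ((hζ r z).symm.trans (hz.trans (h.wave_eq z)))

theorem ae_eq_of_mem_sub_nsmul (hζ : IsEternalSolution S ℓ ζ) (h : IsTravelingWave S ℓ ψ)
    (hζ0 : ∀ n x, 0 ≤ ζ n x) (hup : ∀ n x, ζ n x ≤ ψ x) {n₀ : ℤ} {y₀ : ℝ}
    (htouch : ζ n₀ y₀ = ψ y₀) (n : ℕ) :
    ∀ᵐ x, x ∈ {y₀} - (n + 1) • Function.support (qshift S.q ℓ) →
      ζ (n₀ - (n + 1)) x = ψ x := by
  set V := Function.support (qshift S.q ℓ)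
  have hV : IsOpen V := (S.continuous_qshift ℓ).isOpen_support
  have hstep : ∀ r : ℤ, ∀ z ∈ {x | ζ r x = ψ x}, ∀ᵐ x, z - x ∈ V → x ∈ {x | ζ (r - 1) x = ψ x} :=
    fun r _ hz => hζ.ae_eq_of_eq_succ h (hζ0 _) (hup _) (by rwa [sub_add_cancel])
  induction n with
  | zero =>
    have key := ae_mem_of_forall_ae_sub_mem (U := {y₀}) hV subset_closure fun z hz => by
      rw [mem_singleton_iff.1 hz]
      exact hstep n₀ y₀ htouch
    simpa only [zero_add, one_nsmul, Nat.cast_zero, mem_ofPred_eq] using key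
  | succ n ih =>
    have hU : IsOpen ({y₀} - (n + 1) • V) := by
      rw [succ_nsmul]
      exact (hV.add_left).sub_left
    have key := ae_mem_of_forall_ae_sub_mem hV (subset_closure_of_ae_mem hU ih) (hstep _)
    rw [sub_sub, ← succ_nsmul] at key
    simpa only [Nat.cast_succ, sub_sub, mem_ofPred_eq] using key

theorem exists_ae_eq_on_ball (hζ : IsEternalSolution S ℓ ζ) (h : IsTravelingWave S ℓ ψ)
    (hζ0 : ∀ n x, 0 ≤ ζ n x) (hup : ∀ n x, ζ n x ≤ ψ x) {n₀ : ℤ} {y₀ : ℝ}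
    (htouch : ζ n₀ y₀ = ψ y₀) (M : ℝ) :
    ∃ r₁ : ℤ, ∀ r ≤ r₁, ∀ᵐ x, x ∈ Metric.ball y₀ M → ζ r x = ψ x := by
  obtain ⟨a, ha0, ha⟩ := h.exists_neg_qshift_pos
  obtain ⟨b, hb0, hb⟩ := h.exists_pos_qshift_pos
  obtain ⟨N, hN⟩ := eventually_atTop.1 <| eventually_ball_subset_nsmul
    (S.continuous_qshift ℓ).isOpen_support ha.ne' hb.ne' ha0 hb0 M
  refine ⟨n₀ - (N + 1), fun r hr => ?_⟩
  obtain ⟨n, rfl⟩ : ∃ n : ℕ, r = n₀ - (n + 1) := ⟨(n₀ - r - 1).toNat, by omega⟩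
  filter_upwards [hζ.ae_eq_of_mem_sub_nsmul h hζ0 hup htouch n] with x hx hxM
  refine hx ⟨y₀, rfl, y₀ - x, hN (n + 1) (by omega) ?_, sub_sub_cancel _ _⟩
  rwa [mem_ball_zero_iff, ← dist_eq_norm, dist_comm]

theorem sub_le_mul_of_conv_mem (hζ : IsEternalSolution S ℓ ζ) (h : IsTravelingWave S ℓ ψ)
    {lo hi κ c : ℝ} (hG : ∀ a ∈ Icc lo hi, ∀ b ∈ Icc lo hi, a ≤ b → S.g b - S.g a ≤ κ * (b - a))
    (hκ : 0 ≤ κ) {r : ℤ} {x : ℝ} (hup : ∀ t, ζ r t ≤ ψ t)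
    (hint : Integrable fun y => qshift S.q ℓ y * ζ r (x - y))
    (hlo : lo ≤ conv (qshift S.q ℓ) (ζ r) x) (hhi : conv (qshift S.q ℓ) ψ x ≤ hi)
    (hc : ∀ᵐ t, ψ t - ζ r t ≤ c) : ψ x - ζ (r + 1) x ≤ κ * c := by
  have hle : conv (qshift S.q ℓ) (ζ r) x ≤ conv (qshift S.q ℓ) ψ x :=
    integral_mono hint (h.integrable_conv x) fun y =>
      mul_le_mul_of_nonneg_left (hup _) (S.qshift_nonneg ℓ y)
  have hdiff : conv (qshift S.q ℓ) ψ x - conv (qshift S.q ℓ) (ζ r) x ≤ c := by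
    rw [← conv_sub (h.integrable_conv x) hint]
    refine conv_le_of_ae_le (S.qshift_nonneg ℓ) (S.integrable_qshift ℓ) (S.integral_qshift ℓ)
      ?_ ((ae_comp_sub_left x hc).mono fun _ hy _ => hy)
    simp only [mul_sub]
    exact (h.integrable_conv x).sub hint
  calc ψ x - ζ (r + 1) x
      = S.g (conv (qshift S.q ℓ) ψ x) - S.g (conv (qshift S.q ℓ) (ζ r) x) := by
        rw [← h.wave_eq, hζ]
    _ ≤ κ * (conv (qshift S.q ℓ) ψ x - conv (qshift S.q ℓ) (ζ r) x) :=
        hG _ ⟨hlo, hle.trans hhi⟩ _ ⟨hlo.trans hle, hhi⟩ hle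
    _ ≤ κ * c := mul_le_mul_of_nonneg_left hdiff hκ

theorem exists_right_tail (hζ : IsEternalSolution S ℓ ζ) (h : IsTravelingWave S ℓ ψ)
    {a η κ : ℝ} (hη : 0 < η) (hη1 : η < 1) (hκ : 0 ≤ κ)
    (hG : ∀ a ∈ Icc (1 - η) 1, ∀ b ∈ Icc (1 - η) 1, a ≤ b → S.g b - S.g a ≤ κ * (b - a))
    (hlow : ∀ n x, ψ (x + a) ≤ ζ n x) (hup : ∀ n x, ζ n x ≤ ψ x) :
    ∃ R, ∀ r c x, R ≤ x → (∀ᵐ t, ψ t - ζ r t ≤ c) → ψ x - ζ (r + 1) x ≤ κ * c := by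
  obtain ⟨D, hD0, hD⟩ := S.exists_abs_le_of_qshift_ne_zero ℓ
  obtain ⟨T, hT⟩ := eventually_atTop.1 (h.limit_top.eventually (le_mem_nhds (sub_lt_self 1 hη)))
  refine ⟨T - a + D, fun r c x hx hc => ?_⟩
  have hfar : ∀ y, qshift S.q ℓ y ≠ 0 → 1 - η ≤ ζ r (x - y) := fun y hy =>
    (hT _ (by linarith [le_abs_self y, hD y hy])).trans (hlow r _)
  have hint : Integrable fun y => qshift S.q ℓ y * ζ r (x - y) := by
    by_contra hni
    have h0 : ζ (r + 1) x = 0 := by rw [hζ, conv, integral_undef hni, S.g_zero]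
    linarith [hT (x + a) (by linarith), hlow (r + 1) x]
  exact hζ.sub_le_mul_of_conv_mem h hG hκ (hup r) hint
    (le_conv_of_ae_le (S.qshift_nonneg ℓ) (S.integrable_qshift ℓ) (S.integral_qshift ℓ) hint
      (ae_of_all _ hfar)) (h.conv_mem_Icc x).2 hc

/-- Where the integrand of `q_ℓ * ζ r` is not integrable, `ζ (r + 1) = g 0 = 0` forces
`ψ (· + a) = 0`, hence, far enough to the left, `ψ = 0`. -/
theorem exists_left_tail (hζ : IsEternalSolution S ℓ ζ) (h : IsTravelingWave S ℓ ψ)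
    {a η κ : ℝ} (hη : 0 < η) (hκ : 0 ≤ κ)
    (hG : ∀ a ∈ Icc 0 η, ∀ b ∈ Icc 0 η, a ≤ b → S.g b - S.g a ≤ κ * (b - a))
    (hlow : ∀ n x, ψ (x + a) ≤ ζ n x) (hup : ∀ n x, ζ n x ≤ ψ x) :
    ∃ R, ∀ r c x, x ≤ -R → 0 ≤ c → (∀ᵐ t, ψ t - ζ r t ≤ c) → ψ x - ζ (r + 1) x ≤ κ * c := by
  obtain ⟨D, -, hD⟩ := S.exists_abs_le_of_qshift_ne_zero ℓ
  obtain ⟨T, hT⟩ := eventually_atBot.1 (h.limit_bot.eventually (ge_mem_nhds hη))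
  obtain ⟨C, hC⟩ : ∃ C, ∀ x, ψ (x + a) = 0 → 0 < ψ x → C < x := by
    by_cases hz : ∃ z, ψ z = 0
    · obtain ⟨z, hz⟩ := hz
      exact ⟨z, fun x _ hx => lt_of_not_ge fun hxz => hx.not_ge (hz ▸ h.mono hxz)⟩
    · exact ⟨0, fun x hx => absurd ⟨_, hx⟩ hz⟩
  refine ⟨max (D - T) (-C), fun r c x hx hc0 hc => ?_⟩
  have hζ0 : ∀ t, 0 ≤ ζ r t := fun t => (h.nonneg _).trans (hlow r t)
  by_cases hint : Integrable fun y => qshift S.q ℓ y * ζ r (x - y)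
  · refine hζ.sub_le_mul_of_conv_mem h hG hκ (hup r) hint
      (integral_nonneg fun y => mul_nonneg (S.qshift_nonneg ℓ y) (hζ0 _)) ?_ hc
    refine conv_le_of_ae_le (S.qshift_nonneg ℓ) (S.integrable_qshift ℓ) (S.integral_qshift ℓ)
      (h.integrable_conv x) (ae_of_all _ fun y hy => hT _ ?_)
    linarith [neg_abs_le y, hD y hy, le_max_left (D - T) (-C)]
  · have h0 : ζ (r + 1) x = 0 := by rw [hζ, conv, integral_undef hint, S.g_zero]
    have hψa : ψ (x + a) = 0 := le_antisymm (h0 ▸ hlow (r + 1) x) (h.nonneg _)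
    have hψ : ψ x ≤ 0 := not_lt.1 fun hpos =>
      (hC x hψa hpos).not_ge (by linarith [le_max_right (D - T) (-C)])
    rw [h0]
    nlinarith

theorem exists_contraction_off_ball (hζ : IsEternalSolution S ℓ ζ) (h : IsTravelingWave S ℓ ψ)
    {a : ℝ} (hlow : ∀ n x, ψ (x + a) ≤ ζ n x) (hup : ∀ n x, ζ n x ≤ ψ x) :
    ∃ κ, 0 ≤ κ ∧ κ < 1 ∧ ∃ R, ∀ r c x, R ≤ |x| → 0 ≤ c → (∀ᵐ t, ψ t - ζ r t ≤ c) →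
      ψ x - ζ (r + 1) x ≤ κ * c := by
  obtain ⟨η, hη, hη1, κ, hκ0, hκ1, hG0, hG1⟩ := S.exists_contraction
  obtain ⟨R₁, hR₁⟩ := hζ.exists_right_tail h hη hη1 hκ0 hG1 hlow hup
  obtain ⟨R₂, hR₂⟩ := hζ.exists_left_tail h hη hκ0 hG0 hlow hup
  refine ⟨κ, hκ0, hκ1, max R₁ R₂, fun r c x hx hc0 hc => ?_⟩
  rcases le_abs.1 hx with hx | hx
  · exact hR₁ r c x ((le_max_left _ _).trans hx) hc
  · exact hR₂ r c x (by linarith [le_max_right R₁ R₂]) hc0 hc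

theorem exists_ae_eq (hζ : IsEternalSolution S ℓ ζ) (h : IsTravelingWave S ℓ ψ) {a : ℝ}
    (hlow : ∀ n x, ψ (x + a) ≤ ζ n x) (hup : ∀ n x, ζ n x ≤ ψ x) {n₀ : ℤ} {y₀ : ℝ}
    (htouch : ζ n₀ y₀ = ψ y₀) : ∃ r₁ : ℤ, ∀ r ≤ r₁, ∀ᵐ x, ζ r x = ψ x := by
  have hζ0 : ∀ n x, 0 ≤ ζ n x := fun n x => (h.nonneg _).trans (hlow n x)
  obtain ⟨κ, hκ0, hκ1, R, hR⟩ := hζ.exists_contraction_off_ball h hlow hup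
  obtain ⟨r₁, hr₁⟩ := hζ.exists_ae_eq_on_ball h hζ0 hup htouch (R + |y₀|)
  have hdecay : ∀ i : ℕ, ∀ r ≤ r₁, ∀ᵐ x, ψ x - ζ r x ≤ κ ^ i := by
    intro i
    induction i with
    | zero => exact fun r _ => ae_of_all _ fun x => by linarith [h.le_one x, hζ0 r x, pow_zero κ]
    | succ i ih =>
      intro r hr
      filter_upwards [hr₁ r hr] with x hx
      rcases lt_or_ge |x| R with hxR | hxR
      · rw [hx (by rw [Metric.mem_ball, Real.dist_eq]; linarith [abs_sub x y₀]), sub_self]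
        positivity
      · simpa only [sub_add_cancel, pow_succ'] using
          hR (r - 1) (κ ^ i) x hxR (by positivity) (ih (r - 1) (by omega))
  refine ⟨r₁, fun r hr => ?_⟩
  filter_upwards [ae_all_iff.2 fun i => hdecay i r hr] with x hx
  exact le_antisymm (hup r x) <| sub_nonpos.1 <|
    ge_of_tendsto' (tendsto_pow_atTop_nhds_zero_of_lt_one hκ0 hκ1) hx

theorem eq_of_ae_eq (hζ : IsEternalSolution S ℓ ζ) (h : IsTravelingWave S ℓ ψ) {r : ℤ}
    (hr : ∀ᵐ x, ζ r x = ψ x) (x : ℝ) : ζ (r + 1) x = ψ x := by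
  rw [hζ, conv_congr_ae hr, ← h.wave_eq]

theorem eq_of_le_of_eq (hζ : IsEternalSolution S ℓ ζ) (h : IsTravelingWave S ℓ ψ) {a : ℝ}
    (hlow : ∀ n x, ψ (x + a) ≤ ζ n x) (hup : ∀ n x, ζ n x ≤ ψ x) {n₀ : ℤ} {y₀ : ℝ}
    (htouch : ζ n₀ y₀ = ψ y₀) (n : ℤ) (x : ℝ) : ζ n x = ψ x := by
  obtain ⟨r₁, hr₁⟩ := hζ.exists_ae_eq h hlow hup htouch
  have hae : ∀ r, ∀ᵐ x, ζ r x = ψ x := by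
    intro r
    rcases le_total r r₁ with hr | hr
    · exact hr₁ r hr
    · induction r, hr using Int.leInduction with
      | base => exact hr₁ r₁ le_rfl
      | succ r _ ih => exact ae_of_all _ (hζ.eq_of_ae_eq h ih)
  simpa using hζ.eq_of_ae_eq h (hae (n - 1)) x

end IsEternalSolution

theorem eternal_solution_touching_wave_general (S : BistableSetting) (ℓ : ℝ) (φ : ℝ → ℝ)
    (h : IsTravelingWave S ℓ φ) (ζ : ℤ → ℝ → ℝ)
    (hrec : ∀ (n : ℤ) (x : ℝ), ζ (n + 1) x = S.g (conv (qshift S.q ℓ) (ζ n) x))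
    (ξm ξp : ℝ)
    (hbound : ∀ (n : ℤ) (x : ℝ), φ (x + ξm) ≤ ζ n x ∧ ζ n x ≤ φ (x + ξp))
    (ξ : ℝ) (hup : ∀ (n : ℤ) (x : ℝ), ζ n x ≤ φ (x + ξ))
    (n₀ : ℤ) (y₀ : ℝ) (htouch : ζ n₀ y₀ = φ (y₀ + ξ)) :
    ∀ (n : ℤ) (x : ℝ), ζ n x = φ (x + ξ) :=
  IsEternalSolution.eq_of_le_of_eq hrec (h.comp_add_right ξ) (a := ξm - ξ)
    (fun n x => by simpa only [add_assoc, sub_add_cancel] using (hbound n x).1) hup htouch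

/-- Strong maximum principle for eternal solutions of the recursion in the wave frame:
a two-sided solution trapped between shifts of the traveling wave, lying below `φ(· + ξ)`
and touching it at one point, is identically equal to `φ(· + ξ)`. -/
theorem eternal_solution_touching_wave (S : BistableSetting) (ℓ : ℝ) (φ : ℝ → ℝ)
    (h : IsTravelingWave S ℓ φ) (ζ : ℤ → ℝ → ℝ)
    (hrec : ∀ (n : ℤ) (x : ℝ), ζ (n + 1) x = S.g (conv (qshift S.q ℓ) (ζ n) x))
    (ξm ξp : ℝ) (hξ : ξm ≤ ξp)
    (hbound : ∀ (n : ℤ) (x : ℝ), φ (x + ξm) ≤ ζ n x ∧ ζ n x ≤ φ (x + ξp))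
    (ξ : ℝ) (hup : ∀ (n : ℤ) (x : ℝ), ζ n x ≤ φ (x + ξ))
    (n₀ : ℤ) (y₀ : ℝ) (htouch : ζ n₀ y₀ = φ (y₀ + ξ)) :
    ∀ (n : ℤ) (x : ℝ), ζ n x = φ (x + ξ) :=
  eternal_solution_touching_wave_general S ℓ φ h ζ hrec ξm ξp hbound ξ hup n₀ y₀ htouch
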